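/- Let A ⊆ ℕ and h : ℕ → ℕ a bijection (a disorderly selection). Suppose for every s there exists n > s such that |[0, n(s+1)) ∩ h⁻¹(A)| ≥ n·s. Then limsup_m |h⁻¹(A) ∩ [0,m)|/m = 1; in particular h⁻¹(A) does not have density 0, so A is not intrinsically small if h is computable. -/

import Mathlib

/-!
At time `n (s + 1)` at least `n s` of the first `n (s + 1)` positions of `h⁻¹(A)` are occupied, so the
density of `h⁻¹(A)` there is at least `1 - 1 / (s + 1)`. As `s` is arbitrary and `n > s` can be taken
beyond any bound, the upper density is `1`. If `h` is computable, so is `h⁻¹`, and `h⁻¹(A) = h⁻¹ '' A`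
witnesses that `A` does not have intrinsic density `0`.
-/

open Filter Topology Classical

/-- `cnt A n = |A ∩ [0,n)|`. -/
noncomputable def cnt (A : Set ℕ) (n : ℕ) : ℕ :=
  ((Finset.range n).filter (· ∈ A)).card

/-- `dens A n = |A ∩ [0,n)| / n`, the density of `A` at `n`. -/
noncomputable def dens (A : Set ℕ) (n : ℕ) : ℝ := (cnt A n : ℝ) / n

/-- `A` has intrinsic density `α`: `π(A)` has density `α` for every
computable permutation `π` of `ℕ`. -/
def IntrinsicDensity (A : Set ℕ) (α : ℝ) : Prop :=
  ∀ π : ℕ ≃ ℕ, Computable ⇑π → Tendsto (dens (⇑π '' A)) atTop (𝓝 α)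

lemma cnt_le (A : Set ℕ) (n : ℕ) : cnt A n ≤ n := by
  simpa [cnt] using Finset.card_filter_le (Finset.range n) (· ∈ A)

lemma dens_nonneg (A : Set ℕ) (n : ℕ) : 0 ≤ dens A n := by
  unfold dens; positivity

lemma dens_le_one (A : Set ℕ) (n : ℕ) : dens A n ≤ 1 :=
  div_le_one_of_le₀ (by exact_mod_cast cnt_le A n) n.cast_nonneg

lemma one_sub_inv_le_dens_of_mul_le_cnt {B : Set ℕ} {n s : ℕ} (hn : 0 < n)
    (hcnt : n * s ≤ cnt B (n * (s + 1))) :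
    1 - 1 / ((s : ℝ) + 1) ≤ dens B (n * (s + 1)) := by
  have hcnt' : (n : ℝ) * s ≤ cnt B (n * (s + 1)) := by exact_mod_cast hcnt
  have hn' : (0 : ℝ) < n := by exact_mod_cast hn
  calc 1 - 1 / ((s : ℝ) + 1) = n * s / (n * (s + 1)) := by field_simp; ring
    _ ≤ dens B (n * (s + 1)) := by unfold dens; push_cast; gcongr

lemma limsup_dens_eq_one {B : Set ℕ}
    (hfreq : ∀ s : ℕ, ∃ᶠ m in atTop, 1 - 1 / ((s : ℝ) + 1) ≤ dens B m) :
    limsup (dens B) atTop = 1 := by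
  apply le_antisymm
  · exact limsup_le_of_le (isCoboundedUnder_le_of_le atTop (dens_nonneg B))
      (.of_forall (dens_le_one B))
  · have hlim : Tendsto (fun s : ℕ => 1 - 1 / ((s : ℝ) + 1)) atTop (𝓝 1) := by
      simpa using tendsto_one_div_add_atTop_nhds_zero_nat.const_sub (1 : ℝ)
    exact le_of_tendsto' hlim fun s =>
      le_limsup_of_frequently_le (hfreq s) (isBoundedUnder_of ⟨1, dens_le_one B⟩)

lemma Computable.equiv_symm {α : Type*} [Primcodable α] (e : ℕ ≃ α) (he : Computable e) :
    Computable e.symm := by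
  have hsearch : Computable₂ fun (a : α) (n : ℕ) => decide (e n = a) :=
    Primrec.eq.decide.to_comp.comp (he.comp .snd) .fst
  refine (Partrec.rfind hsearch.partrec.to₂).of_eq_tot fun a => Nat.mem_rfind.2 ⟨by simp, ?_⟩
  intro m hm
  have hne : e m ≠ a := fun hma => hm.ne (e.symm_apply_eq.2 hma.symm).symm
  simp [hne]

theorem stmt14 (A : Set ℕ) (h : ℕ ≃ ℕ)
    (hyp : ∀ s : ℕ, ∃ n > s, n * s ≤ cnt {t | h t ∈ A} (n * (s + 1))) :
    limsup (dens {t | h t ∈ A}) atTop = 1 ∧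
      ¬ Tendsto (dens {t | h t ∈ A}) atTop (𝓝 0) ∧
      (Computable ⇑h → ¬ IntrinsicDensity A 0) := by
  set B := {t | h t ∈ A}
  have hfreq (s : ℕ) : ∃ᶠ m in atTop, 1 - 1 / ((s : ℝ) + 1) ≤ dens B m := by
    refine frequently_atTop.2 fun N => ?_
    -- using `max s N` pushes the time past `N` and only raises the bound `1 - 1 / (s + 1)`
    obtain ⟨n, hn, hcnt⟩ := hyp (max s N)
    refine ⟨n * (max s N + 1), by nlinarith [le_max_right s N], ?_⟩
    refine le_trans ?_ (one_sub_inv_le_dens_of_mul_le_cnt (by omega) hcnt)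
    gcongr
    exact_mod_cast le_max_left s N
  have hlimsup : limsup (dens B) atTop = 1 := limsup_dens_eq_one hfreq
  have hnot : ¬ Tendsto (dens B) atTop (𝓝 0) := fun ht =>
    one_ne_zero (hlimsup.symm.trans ht.limsup_eq)
  refine ⟨hlimsup, hnot, fun hcomp hid => hnot ?_⟩
  have himage : ⇑h.symm '' A = B := h.symm.image_eq_preimage_symm A
  rw [← himage]
  exact hid h.symm (hcomp.equiv_symm h)
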